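/- arXiv:0706.0323 — 2 statements merged into one kernel-verified Lean document; each statement's English description precedes it below -/
import Mathlib

section
/- Let ψ be a formal power series over ℂ with zero constant and linear coefficients and nonzero quadratic coefficient. Then there exist exactly two formal power series with zero constant term that solve ψ∘χ = X²: if χ is one solution, then the set of all solutions is {χ(X), χ(−X)}, and χ(X) ≠ χ(−X). (Proposition 2.3(1): ψ has exactly two compositional inverses as power series in √z, with coefficients related by β̃_k = (−1)^k β_k.) -/
/-!
Comparing coefficients of `X²` in `ψ ∘ χ = X²` gives `ψ₂ β₁² = 1`, so `β₁ = ±ψ₂^(-1/2)`.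
Because `ψ₁ = 0`, if `χ ≡ χ' mod X^(n+1)` with `n ≥ 1`, then
`ψ ∘ χ - ψ ∘ χ' ≡ 2 ψ₂ β₁ X (χ - χ') mod X^(n+3)`, so each further coefficient `β_{n+1}` of a
solution is forced by the earlier ones. This gives uniqueness once `β₁` is fixed, and a Newton
iteration whose `X`-adic limit is a solution. Substituting `-X` for `X` sends solutions to
solutions and changes the sign of `β₁`, so the two choices of `β₁` give `χ(X)` and `χ(-X)`.
-/

open PowerSeries

/-- Formal composition `F ∘ G` of power series over `ℂ`, intended for the case where
`G` has zero constant term (so that only finitely many terms contribute to each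
coefficient). -/
noncomputable def comp (F G : PowerSeries ℂ) : PowerSeries ℂ :=
  PowerSeries.mk fun n =>
    PowerSeries.coeff n
      (∑ k ∈ Finset.range (n + 1), PowerSeries.C (PowerSeries.coeff k F) * G ^ k)

section XAdic

variable {R : Type*} [CommRing R]

theorem X_pow_dvd_pow_sub_pow {f g : R⟦X⟧} {n : ℕ} (hf : X ∣ f) (hg : X ∣ g)
    (h : X ^ n ∣ f - g) (k : ℕ) : X ^ (n + k) ∣ f ^ (k + 1) - g ^ (k + 1) := by
  rw [← geom_sum₂_mul, pow_add, mul_comm (X ^ n)]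
  refine mul_dvd_mul (Finset.dvd_sum fun i hi => ?_) h
  have hik : i ≤ k := Nat.lt_succ_iff.mp (Finset.mem_range.mp hi)
  calc X ^ k = X ^ i * X ^ (k + 1 - 1 - i) := by rw [← pow_add]; congr 1; omega
    _ ∣ f ^ i * g ^ (k + 1 - 1 - i) :=
      mul_dvd_mul (pow_dvd_pow_of_dvd hf i) (pow_dvd_pow_of_dvd hg _)

theorem eq_of_forall_X_pow_dvd_sub {f g : R⟦X⟧} (h : ∀ n, X ^ n ∣ f - g) : f = g := by
  ext n
  have := X_pow_dvd_iff.mp (h (n + 1)) n n.lt_succ_self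
  rwa [map_sub, sub_eq_zero] at this

theorem X_pow_succ_dvd_sub_C_coeff_mul_X_pow {f : R⟦X⟧} {n : ℕ} (h : X ^ n ∣ f) :
    X ^ (n + 1) ∣ f - C (coeff n f) * X ^ n := by
  rw [X_pow_dvd_iff] at h ⊢
  intro m hm
  rcases Nat.lt_succ_iff_lt_or_eq.mp hm with hm | rfl
  · simp [h m hm, coeff_X_pow, hm.ne]
  · simp

theorem exists_forall_X_pow_dvd_sub (f : ℕ → R⟦X⟧)
    (hf : ∀ n, X ^ (n + 1) ∣ f (n + 1) - f n) : ∃ g, ∀ n, X ^ (n + 1) ∣ g - f n := by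
  have hcauchy : ∀ n m, n ≤ m → X ^ (n + 1) ∣ f m - f n := by
    intro n m hnm
    induction m, hnm using Nat.le_induction with
    | base => simp
    | succ m hnm ih =>
      rw [← sub_add_sub_cancel]
      exact dvd_add ((pow_dvd_pow X (by omega)).trans (hf m)) ih
  refine ⟨mk fun k => coeff k (f k), fun n => X_pow_dvd_iff.mpr fun j hj => ?_⟩
  have := X_pow_dvd_iff.mp (hcauchy j n (by omega)) j j.lt_succ_self
  rw [map_sub] at this ⊢
  rw [coeff_mk]
  linear_combination -this

theorem X_dvd_rescale {f : R⟦X⟧} (c : R) (hf : X ∣ f) : X ∣ rescale c f := by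
  rw [X_dvd_iff, ← coeff_zero_eq_constantCoeff_apply, coeff_rescale, pow_zero, one_mul,
    coeff_zero_eq_constantCoeff_apply]
  exact X_dvd_iff.mp hf

end XAdic

theorem coeff_comp (F G : ℂ⟦X⟧) (n : ℕ) :
    coeff n (comp F G) = ∑ k ∈ Finset.range (n + 1), coeff k F * coeff n (G ^ k) := by
  simp [comp, coeff_mk, map_sum, coeff_C_mul]

theorem X_pow_dvd_comp_sub_sum {G : ℂ⟦X⟧} (hG : X ∣ G) (F : ℂ⟦X⟧) (N : ℕ) :
    X ^ N ∣ comp F G - ∑ k ∈ Finset.range N, C (coeff k F) * G ^ k := by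
  refine X_pow_dvd_iff.mpr fun m hm => ?_
  simp only [map_sub, map_sum, coeff_C_mul, coeff_comp, sub_eq_zero]
  refine Finset.sum_subset (Finset.range_subset_range.mpr (by omega)) fun k _ hk => ?_
  have hmk : m < k := by simpa using hk
  rw [X_pow_dvd_iff.mp (pow_dvd_pow_of_dvd hG k) m hmk, mul_zero]

theorem X_pow_dvd_comp_sub_comp {G G' : ℂ⟦X⟧} (hG : X ∣ G) (hG' : X ∣ G') {n : ℕ}
    (h : X ^ n ∣ G - G') (F : ℂ⟦X⟧) : X ^ n ∣ comp F G - comp F G' := by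
  have hsum : X ^ n ∣ ∑ k ∈ Finset.range n, C (coeff k F) * (G ^ k - G' ^ k) :=
    Finset.dvd_sum fun k _ => dvd_mul_of_dvd_right (h.trans (sub_dvd_pow_sub_pow G G' k)) _
  have := (dvd_sub (X_pow_dvd_comp_sub_sum hG F n) (X_pow_dvd_comp_sub_sum hG' F n)).add hsum
  convert this using 1
  simp only [mul_sub, Finset.sum_sub_distrib]
  ring

/-- First-order Taylor expansion of `ψ` at `χ'`: modulo `X^(n+3)` only the quadratic term of `ψ`
contributes, and `χ + χ' ≡ 2 β₁ X mod X²`. -/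
theorem X_pow_dvd_comp_sub_comp_sub_linear {ψ χ χ' : ℂ⟦X⟧} (hψ : coeff 1 ψ = 0)
    (hχ : X ∣ χ) (hχ' : X ∣ χ') {n : ℕ} (hn : 1 ≤ n) (h : X ^ (n + 1) ∣ χ - χ') :
    X ^ (n + 3) ∣
      comp ψ χ - comp ψ χ' - C (2 * coeff 2 ψ * coeff 1 χ) * X * (χ - χ') := by
  have hlin : X ^ 2 ∣ χ + χ' - C (2 * coeff 1 χ) * X := by
    have h1 : coeff 1 χ' = coeff 1 χ := by
      have := X_pow_dvd_iff.mp h 1 (by omega)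
      rw [map_sub, sub_eq_zero] at this
      exact this.symm
    refine X_pow_dvd_iff.mpr fun m hm => ?_
    interval_cases m
    · simp [X_dvd_iff.mp hχ, X_dvd_iff.mp hχ']
    · simp only [map_sub, map_add, h1, map_mul, coeff_succ_mul_X, coeff_mul_C, coeff_zero_C]
      ring
  have hquad : X ^ (n + 3) ∣ C (coeff 2 ψ) * (χ ^ 2 - χ' ^ 2) -
      C (2 * coeff 2 ψ * coeff 1 χ) * X * (χ - χ') := by
    have : C (coeff 2 ψ) * (χ ^ 2 - χ' ^ 2) - C (2 * coeff 2 ψ * coeff 1 χ) * X * (χ - χ') =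
        C (coeff 2 ψ) * ((χ + χ' - C (2 * coeff 1 χ) * X) * (χ - χ')) := by
      simp only [map_mul]
      ring
    rw [this, show n + 3 = 2 + (n + 1) by ring, pow_add]
    exact dvd_mul_of_dvd_right (mul_dvd_mul hlin h) _
  have hhigh : ∀ k, X ^ (n + 3) ∣ C (coeff (k + 3) ψ) * (χ ^ (k + 3) - χ' ^ (k + 3)) :=
    fun k => dvd_mul_of_dvd_right
      ((pow_dvd_pow X (by omega)).trans (X_pow_dvd_pow_sub_pow hχ hχ' h (k + 2))) _
  have hsum : ∑ k ∈ Finset.range (n + 3), C (coeff k ψ) * χ ^ k -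
      ∑ k ∈ Finset.range (n + 3), C (coeff k ψ) * χ' ^ k =
      ∑ k ∈ Finset.range n, C (coeff (k + 3) ψ) * (χ ^ (k + 3) - χ' ^ (k + 3)) +
        C (coeff 2 ψ) * (χ ^ 2 - χ' ^ 2) := by
    rw [← Finset.sum_sub_distrib]
    simp only [Finset.sum_range_succ', ← mul_sub, hψ]
    simp
  have := (dvd_sub (X_pow_dvd_comp_sub_sum hχ ψ (n + 3)) (X_pow_dvd_comp_sub_sum hχ' ψ (n + 3))).add
    ((Finset.dvd_sum (s := Finset.range n) fun k _ => hhigh k).add hquad)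
  convert this using 1
  linear_combination hsum

theorem coeff_two_comp {ψ χ : ℂ⟦X⟧} (hψ : coeff 1 ψ = 0) (hχ : X ∣ χ) :
    coeff 2 (comp ψ χ) = coeff 2 ψ * coeff 1 χ ^ 2 := by
  obtain ⟨g, rfl⟩ := hχ
  simp [coeff_comp, Finset.sum_range_succ, hψ, mul_pow, coeff_X_pow_mul', coeff_one]

theorem comp_rescale (F G : ℂ⟦X⟧) (c : ℂ) :
    comp F (rescale c G) = rescale c (comp F G) := by
  ext n
  simp only [coeff_rescale, coeff_comp, Finset.mul_sum, ← map_pow]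
  exact Finset.sum_congr rfl fun k _ => by ring

theorem eq_of_comp_eq_comp {ψ χ χ' : ℂ⟦X⟧} (hψ1 : coeff 1 ψ = 0) (hψ2 : coeff 2 ψ ≠ 0)
    (hχ : X ∣ χ) (hχ' : X ∣ χ') (hβ : coeff 1 χ ≠ 0) (h1 : coeff 1 χ = coeff 1 χ')
    (h : comp ψ χ = comp ψ χ') : χ = χ' := by
  have hdvd : ∀ n, 1 ≤ n → X ^ (n + 1) ∣ χ - χ' := by
    intro n hn
    induction n, hn using Nat.le_induction with
    | base =>
      refine X_pow_dvd_iff.mpr fun m hm => ?_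
      interval_cases m
      · simp [X_dvd_iff.mp hχ, X_dvd_iff.mp hχ']
      · simp [h1]
    | succ n hn ih =>
      have hc : IsUnit (C (2 * coeff 2 ψ * coeff 1 χ)) :=
        (IsUnit.mk0 _ (by simp [hψ2, hβ])).map C
      have := X_pow_dvd_comp_sub_comp_sub_linear hψ1 hχ hχ' hn ih
      rwa [h, sub_self, zero_sub, dvd_neg, mul_assoc, hc.dvd_mul_left, pow_succ',
        mul_dvd_mul_iff_left X_ne_zero] at this
  exact eq_of_forall_X_pow_dvd_sub fun n =>
    (pow_dvd_pow X (by omega)).trans (hdvd (n + 1) (by omega))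

/-- The correction at step `n + 1` cancels the coefficient of `X^(n+3)` in `ψ ∘ χₙ - X²`. -/
noncomputable def newtonSeq (ψ : ℂ⟦X⟧) (s : ℂ) : ℕ → ℂ⟦X⟧
  | 0 => C s * X
  | n + 1 => newtonSeq ψ s n -
      C (coeff (n + 3) (comp ψ (newtonSeq ψ s n)) / (2 * coeff 2 ψ * s)) * X ^ (n + 2)

theorem X_pow_dvd_newtonSeq_succ_sub (ψ : ℂ⟦X⟧) (s : ℂ) (n : ℕ) :
    X ^ (n + 2) ∣ newtonSeq ψ s (n + 1) - newtonSeq ψ s n := by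
  rw [newtonSeq, sub_sub_cancel_left, dvd_neg]
  exact dvd_mul_left _ _

theorem newtonSeq_spec {ψ : ℂ⟦X⟧} {s : ℂ} (hψ0 : coeff 0 ψ = 0) (hψ1 : coeff 1 ψ = 0)
    (hs : coeff 2 ψ * s ^ 2 = 1) (n : ℕ) :
    X ∣ newtonSeq ψ s n ∧ coeff 1 (newtonSeq ψ s n) = s ∧
      X ^ (n + 3) ∣ comp ψ (newtonSeq ψ s n) - X ^ 2 := by
  induction n with
  | zero =>
    refine ⟨dvd_mul_left _ _, by simp [newtonSeq], ?_⟩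
    have hsum : ∑ k ∈ Finset.range 3, C (coeff k ψ) * (C s * X) ^ k = X ^ 2 := by
      simp [Finset.sum_range_succ, hψ0, hψ1, mul_pow, ← map_pow, ← mul_assoc, ← map_mul, hs]
    simpa [newtonSeq, hsum] using X_pow_dvd_comp_sub_sum (dvd_mul_left X (C s)) ψ 3
  | succ n ih =>
    obtain ⟨hX, h1, happrox⟩ := ih
    set a := newtonSeq ψ s n with ha
    set e := coeff (n + 3) (comp ψ a) with he
    have hX' : X ∣ newtonSeq ψ s (n + 1) :=
      dvd_sub hX (dvd_mul_of_dvd_right (dvd_pow_self X (by omega)) _)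
    have h1' : coeff 1 (newtonSeq ψ s (n + 1)) = s := by
      simp [newtonSeq, ← ha, h1, coeff_X_pow]
    refine ⟨hX', h1', ?_⟩
    have hcorr : C (2 * coeff 2 ψ * s) * X * (newtonSeq ψ s (n + 1) - a) =
        -(C e * X ^ (n + 3)) := by
      have hc : 2 * coeff 2 ψ * s ≠ 0 := mul_ne_zero
        (mul_ne_zero two_ne_zero (left_ne_zero_of_mul_eq_one hs))
        (pow_ne_zero_iff two_ne_zero |>.mp (right_ne_zero_of_mul_eq_one hs))
      rw [newtonSeq, ← ha, ← he, sub_sub_cancel_left,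
        show C e = C (2 * coeff 2 ψ * s) * C (e / (2 * coeff 2 ψ * s)) by
          rw [← map_mul, mul_div_cancel₀ _ hc]]
      ring
    have hnewton := X_pow_dvd_comp_sub_comp_sub_linear hψ1 hX' hX (by omega : 1 ≤ n + 1)
      (X_pow_dvd_newtonSeq_succ_sub ψ s n)
    have hlead := X_pow_succ_dvd_sub_C_coeff_mul_X_pow happrox
    rw [h1'] at hnewton
    rw [map_sub, coeff_X_pow, if_neg (by omega), sub_zero] at hlead
    convert hnewton.add hlead using 1
    linear_combination hcorr

theorem exists_comp_eq_X_sq {ψ : ℂ⟦X⟧} (hψ0 : coeff 0 ψ = 0) (hψ1 : coeff 1 ψ = 0)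
    (hψ2 : coeff 2 ψ ≠ 0) : ∃ χ, X ∣ χ ∧ comp ψ χ = X ^ 2 := by
  obtain ⟨s, hs⟩ := IsAlgClosed.exists_pow_nat_eq (coeff 2 ψ)⁻¹ two_pos
  have hspec := newtonSeq_spec hψ0 hψ1 (by rw [hs, mul_inv_cancel₀ hψ2]) (s := s)
  obtain ⟨χ, hχ⟩ := exists_forall_X_pow_dvd_sub (newtonSeq ψ s) fun n =>
    (pow_dvd_pow X (by omega)).trans (X_pow_dvd_newtonSeq_succ_sub ψ s n)
  have hX : X ∣ χ := by
    simpa using (show X ∣ χ - newtonSeq ψ s 0 by simpa using hχ 0).add (hspec 0).1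
  refine ⟨χ, hX, eq_of_forall_X_pow_dvd_sub fun n => ?_⟩
  have hcomp := X_pow_dvd_comp_sub_comp hX (hspec n).1 (hχ n) ψ
  simpa using ((pow_dvd_pow X (by omega)).trans hcomp).add
    ((pow_dvd_pow X (by omega)).trans (hspec n).2.2)

theorem coeff_two_mul_coeff_one_sq {ψ χ : ℂ⟦X⟧} (hψ : coeff 1 ψ = 0) (hχ : X ∣ χ)
    (h : comp ψ χ = X ^ 2) : coeff 2 ψ * coeff 1 χ ^ 2 = 1 := by
  simpa [h, coeff_X_pow] using (coeff_two_comp hψ hχ).symm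

theorem coeff_one_ne_zero_of_comp_eq_X_sq {ψ χ : ℂ⟦X⟧} (hψ : coeff 1 ψ = 0) (hχ : X ∣ χ)
    (h : comp ψ χ = X ^ 2) : coeff 1 χ ≠ 0 := by
  intro h0
  simpa [h0] using coeff_two_mul_coeff_one_sq hψ hχ h

theorem comp_rescale_neg_one_eq_X_sq {ψ χ : ℂ⟦X⟧} (h : comp ψ χ = X ^ 2) :
    comp ψ (rescale (-1) χ) = X ^ 2 := by
  rw [comp_rescale, h, map_pow, rescale_neg_one_X, neg_sq]

theorem eq_or_eq_rescale_neg_one {ψ χ χ' : ℂ⟦X⟧} (hψ1 : coeff 1 ψ = 0) (hψ2 : coeff 2 ψ ≠ 0)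
    (hχ : X ∣ χ) (hχ' : X ∣ χ') (h : comp ψ χ = X ^ 2) (h' : comp ψ χ' = X ^ 2) :
    χ' = χ ∨ χ' = rescale (-1) χ := by
  have hβ := coeff_two_mul_coeff_one_sq hψ1 hχ h
  have hβ0 := coeff_one_ne_zero_of_comp_eq_X_sq hψ1 hχ h
  have hsq : coeff 1 χ' ^ 2 = coeff 1 χ ^ 2 :=
    mul_left_cancel₀ hψ2 ((coeff_two_mul_coeff_one_sq hψ1 hχ' h').trans hβ.symm)
  rcases sq_eq_sq_iff_eq_or_eq_neg.mp hsq with h1 | h1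
  · exact Or.inl (eq_of_comp_eq_comp hψ1 hψ2 hχ hχ' hβ0 h1.symm (h.trans h'.symm)).symm
  · refine Or.inr (eq_of_comp_eq_comp hψ1 hψ2 ?_ hχ' ?_ ?_ ?_).symm
    · exact X_dvd_rescale (-1) hχ
    · simpa [coeff_rescale] using hβ0
    · simp [coeff_rescale, h1]
    · rw [comp_rescale_neg_one_eq_X_sq h, h']

/-- Proposition 2.3(1): `ψ` has exactly two compositional inverses as power series in
`√z`: a solution `χ` of `ψ ∘ χ = X²` with zero constant term exists, and for any such
solution `χ`, the set of all solutions is `{χ(X), χ(−X)}` (the second series having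
coefficients `β̃ₖ = (−1)ᵏ βₖ`), these two being distinct. -/
theorem stmt_4 (ψ : PowerSeries ℂ)
    (h0 : PowerSeries.coeff 0 ψ = 0)
    (h1 : PowerSeries.coeff 1 ψ = 0)
    (h2 : PowerSeries.coeff 2 ψ ≠ 0) :
    (∃ χ : PowerSeries ℂ, PowerSeries.constantCoeff χ = 0 ∧
        comp ψ χ = PowerSeries.X ^ 2) ∧
      ∀ χ : PowerSeries ℂ, PowerSeries.constantCoeff χ = 0 →
        comp ψ χ = PowerSeries.X ^ 2 →
        ({χ' : PowerSeries ℂ | PowerSeries.constantCoeff χ' = 0 ∧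
            comp ψ χ' = PowerSeries.X ^ 2}
          = {χ, PowerSeries.rescale (-1 : ℂ) χ} ∧
          χ ≠ PowerSeries.rescale (-1 : ℂ) χ) := by
  simp only [← X_dvd_iff]
  refine ⟨exists_comp_eq_X_sq h0 h1 h2, fun χ hχ h => ⟨?_, ?_⟩⟩
  · refine Set.ext fun χ' =>
      ⟨fun ⟨hχ', h'⟩ => eq_or_eq_rescale_neg_one h1 h2 hχ hχ' h h', ?_⟩
    rintro (rfl | rfl)
    · exact ⟨hχ, h⟩
    · exact ⟨X_dvd_rescale (-1) hχ, comp_rescale_neg_one_eq_X_sq h⟩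
  · intro heq
    have h1χ := congrArg (coeff 1) heq
    simp only [coeff_rescale, pow_one, neg_one_mul, CharZero.eq_neg_self_iff] at h1χ
    exact coeff_one_ne_zero_of_comp_eq_X_sq h1 hχ h h1χ
end

section
/- Let C and ψ be formal power series over ℂ with zero constant term such that ψ = C∘(X·(1+ψ)) (the moment–cumulant relation). Assume the linear coefficient of ψ vanishes and its quadratic coefficient is nonzero (the mean-zero case), and let χ be a formal power series with zero constant term satisfying ψ∘χ = X² (one of the two √z-inverses of ψ). Then C∘((1+X²)·χ) = X². (The relation C[zS(z)] = z read as formal power series in √z, for the case φ(x) = 0, φ(x²) ≠ 0.) -/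
/-!
Once `comp` is identified with Mathlib's `PowerSeries.subst`, the identity is a short
computation: substituting `χ` into `X·(1+ψ)` gives `(1+X²)·χ` because `ψ ∘ χ = X²`, so by
associativity of substitution `C ∘ ((1+X²)·χ) = (C ∘ (X·(1+ψ))) ∘ χ = ψ ∘ χ = X²`.
-/

open PowerSeries

theorem coeff_pow_eq_zero_of_lt {R : Type*} [CommSemiring R] {G : R⟦X⟧}
    (hG : constantCoeff G = 0) {n k : ℕ} (h : n < k) : coeff n (G ^ k) = 0 :=
  X_pow_dvd_iff.mp (pow_dvd_pow_of_dvd (X_dvd_iff.mpr hG) k) n h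

theorem comp_eq_subst {F G : ℂ⟦X⟧} (hG : constantCoeff G = 0) : comp F G = F.subst G := by
  ext n
  rw [coeff_subst' (HasSubst.of_constantCoeff_zero' hG),
    finsum_eq_sum_of_support_subset (s := Finset.range (n + 1))]
  · simp [comp, map_sum, coeff_C_mul]
  · intro d hd
    by_contra hdn
    simp only [Finset.coe_range, Set.mem_Iio, not_lt] at hdn
    exact hd (by simp only [coeff_pow_eq_zero_of_lt hG (show n < d by omega), smul_zero])

theorem stmt_10_general (C ψ χ : PowerSeries ℂ)
    (hmc : ψ = comp C (PowerSeries.X * (1 + ψ)))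
    (hχ0 : PowerSeries.constantCoeff χ = 0)
    (hχ : comp ψ χ = PowerSeries.X ^ 2) :
    comp C ((1 + PowerSeries.X ^ 2) * χ) = PowerSeries.X ^ 2 := by
  have hA0 : constantCoeff (X * (1 + ψ)) = 0 := by simp
  have hχsubst : HasSubst χ := HasSubst.of_constantCoeff_zero' hχ0
  rw [comp_eq_subst hχ0] at hχ
  rw [comp_eq_subst hA0] at hmc
  have hinner : (X * (1 + ψ)).subst χ = (1 + X ^ 2) * χ := by
    rw [subst_mul hχsubst, subst_X hχsubst, subst_add hχsubst, hχ, ← coe_substAlgHom hχsubst,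
      map_one]
    ring
  rw [comp_eq_subst (by simp [hχ0]), ← hinner,
    ← subst_comp_subst_apply (HasSubst.of_constantCoeff_zero' hA0) hχsubst, ← hmc, hχ]

/-- The relation `C[zS(z)] = z` read as formal power series in `√z` (encoded via
`z = X²`), for the mean-zero case `φ(x) = 0`, `φ(x²) ≠ 0`: if `ψ = C[z·M(z)]` with
`M = 1 + ψ`, the linear coefficient of `ψ` vanishes, its quadratic coefficient is
nonzero, and `χ` is one of the two `√z`-inverses of `ψ` (`ψ ∘ χ = X²`), then
`C ∘ ((1+X²)·χ) = X²`. -/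
theorem stmt_10 (C ψ χ : PowerSeries ℂ)
    (hC0 : PowerSeries.constantCoeff C = 0)
    (hψ0 : PowerSeries.constantCoeff ψ = 0)
    (hmc : ψ = comp C (PowerSeries.X * (1 + ψ)))
    (hψ1 : PowerSeries.coeff 1 ψ = 0)
    (hψ2 : PowerSeries.coeff 2 ψ ≠ 0)
    (hχ0 : PowerSeries.constantCoeff χ = 0)
    (hχ : comp ψ χ = PowerSeries.X ^ 2) :
    comp C ((1 + PowerSeries.X ^ 2) * χ) = PowerSeries.X ^ 2 :=
  stmt_10_general C ψ χ hmc hχ0 hχ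
end
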